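/- arXiv:1604.00076 — 2 statements merged into one kernel-verified Lean document; each statement's English description precedes it below -/
import Mathlib

section
/- Let G be a simple graph on a finite vertex set V and let n ∈ ℕ. Then the number of proper colorings f : V → Fin n equals the sum, over all set compositions C of V in which every block is an independent set of G, of the binomial coefficient choose(n, ℓ(C)). -/
/-!
A colouring `f : V → Fin n` is the same thing as the set `s` of colours it uses together with
its colour classes listed in increasing order of colour; these form a set composition of
length `#s`, and `f` is proper exactly when all classes are independent. Conversely, a set
composition `C` and an `ℓ(C)`-subset `s` of colours give back a colouring by painting the
`i`-th block with the `i`-th smallest element of `s`. There are `choose n ℓ(C)` such `s`.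
-/

def IsSetComposition {I : Type*} [Fintype I] [DecidableEq I] (C : List (Finset I)) : Prop :=
  (∀ B ∈ C, B.Nonempty) ∧ C.Pairwise Disjoint ∧ C.foldr (· ∪ ·) ∅ = Finset.univ

open Finset Function

theorem List.mem_foldr_union_empty {V : Type*} [DecidableEq V] {l : List (Finset V)} {v : V} :
    v ∈ l.foldr (· ∪ ·) ∅ ↔ ∃ B ∈ l, v ∈ B := by
  induction l with
  | nil => simp
  | cons B l ih => simp [ih]

section

variable {V α : Type*} [Fintype V]

namespace IsSetComposition

variable [DecidableEq V] {C : List (Finset V)}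

def blockIndex (hC : IsSetComposition C) (v : V) : Fin C.length :=
  ⟨C.findIdx (decide <| v ∈ ·), List.findIdx_lt_length_of_exists <| by
    obtain ⟨B, hB, hv⟩ := List.mem_foldr_union_empty.1 (hC.2.2 ▸ mem_univ v)
    exact ⟨B, hB, decide_eq_true hv⟩⟩

theorem mem_getElem_blockIndex (hC : IsSetComposition C) (v : V) :
    v ∈ C[hC.blockIndex v] :=
  of_decide_eq_true (List.findIdx_getElem (w := (hC.blockIndex v).2))

theorem mem_getElem_iff (hC : IsSetComposition C) {v : V} {i : Fin C.length} :
    v ∈ C[i] ↔ hC.blockIndex v = i := by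
  refine ⟨fun hv => ?_, fun h => h ▸ hC.mem_getElem_blockIndex v⟩
  by_contra hne
  have hdisj : ∀ {j k : Fin C.length}, j < k → Disjoint C[j] C[k] := fun hjk =>
    List.pairwise_iff_getElem.1 hC.2.1 _ _ _ _ hjk
  rcases Fin.lt_or_lt_of_ne hne with h | h
  · exact disjoint_left.1 (hdisj h) (hC.mem_getElem_blockIndex v) hv
  · exact disjoint_left.1 (hdisj h) hv (hC.mem_getElem_blockIndex v)

theorem blockIndex_surjective (hC : IsSetComposition C) : Surjective hC.blockIndex := fun i =>
  let ⟨v, hv⟩ := hC.1 _ (List.getElem_mem i.2)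
  ⟨v, hC.mem_getElem_iff.1 hv⟩

theorem length_le_card (hC : IsSetComposition C) : C.length ≤ Fintype.card V := by
  simpa using Fintype.card_le_of_surjective _ hC.blockIndex_surjective

variable [LinearOrder α] {s : Finset α}

def paint (hC : IsSetComposition C) (hs : #s = C.length) (v : V) : α :=
  s.orderEmbOfFin hs (hC.blockIndex v)

theorem paint_eq_paint_iff (hC : IsSetComposition C) (hs : #s = C.length) {u v : V} :
    hC.paint hs u = hC.paint hs v ↔ hC.blockIndex u = hC.blockIndex v :=
  (s.orderEmbOfFin hs).injective.eq_iff

theorem image_paint (hC : IsSetComposition C) (hs : #s = C.length) :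
    univ.image (hC.paint hs) = s := by
  change univ.image (s.orderEmbOfFin hs ∘ hC.blockIndex) = s
  rw [← image_image, image_univ_of_surjective hC.blockIndex_surjective,
    image_orderEmbOfFin_univ]

end IsSetComposition

theorem finite_isSetComposition_and [DecidableEq V] (P : List (Finset V) → Prop) :
    Finite {C : List (Finset V) // IsSetComposition C ∧ P C} :=
  ((List.finite_length_le (Finset V) (Fintype.card V)).subset
    fun _ hC => hC.1.length_le_card).to_subtype

section ColorClasses

variable [LinearOrder α]

def colorClasses (f : V → α) : List (Finset V) :=
  (univ.image f).sort.map fun c => univ.filter (f · = c)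

theorem length_colorClasses (f : V → α) : (colorClasses f).length = #(univ.image f) := by
  rw [colorClasses, List.length_map, length_sort]

theorem mem_getElem_colorClasses {f : V → α} {i : ℕ} (hi : i < (colorClasses f).length)
    {v : V} :
    v ∈ (colorClasses f)[i] ↔
      f v = (univ.image f).sort[i]'(by simpa [colorClasses] using hi) := by
  simp [colorClasses]

theorem eq_of_mem_colorClasses {f : V → α} {B : Finset V} (hB : B ∈ colorClasses f) {u v : V}
    (hu : u ∈ B) (hv : v ∈ B) : f u = f v := by
  obtain ⟨c, -, rfl⟩ := List.mem_map.1 hB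
  exact (mem_filter.1 hu).2.trans (mem_filter.1 hv).2.symm

variable [DecidableEq V]

theorem isSetComposition_colorClasses (f : V → α) : IsSetComposition (colorClasses f) := by
  refine ⟨?_, ?_, ?_⟩
  · simp [colorClasses, Finset.Nonempty]
  · refine List.Pairwise.map _ (fun c c' hcc' => ?_) (sort_nodup _ _)
    exact disjoint_filter.2 fun v _ hv hv' => hcc' (hv.symm.trans hv')
  · refine eq_univ_of_forall fun v =>
      List.mem_foldr_union_empty.2 ⟨univ.filter (f · = f v), ?_, by simp⟩
    simp [colorClasses]

theorem paint_colorClasses (f : V → α) :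
    (isSetComposition_colorClasses f).paint (length_colorClasses f).symm = f := by
  funext v
  have hv := (isSetComposition_colorClasses f).mem_getElem_blockIndex v
  rw [Fin.getElem_fin, mem_getElem_colorClasses] at hv
  exact hv.symm

theorem colorClasses_paint {C : List (Finset V)} (hC : IsSetComposition C) {s : Finset α}
    (hs : #s = C.length) : colorClasses (hC.paint hs) = C := by
  refine List.ext_getElem (by rw [length_colorClasses, hC.image_paint, hs]) fun i _ hi => ?_
  ext v
  simp only [mem_getElem_colorClasses, hC.image_paint]
  change s.orderEmbOfFin hs (hC.blockIndex v) = s.orderEmbOfFin hs ⟨i, hi⟩ ↔ _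
  rw [(s.orderEmbOfFin hs).injective.eq_iff, ← hC.mem_getElem_iff, Fin.getElem_fin]

def properColoringEquiv (G : SimpleGraph V) :
    {f : V → α // ∀ u v, G.Adj u v → f u ≠ f v} ≃
      Σ C : {C : List (Finset V) // IsSetComposition C ∧ ∀ B ∈ C, ∀ u ∈ B, ∀ v ∈ B, ¬ G.Adj u v},
        {s : Finset α // #s = C.1.length} where
  toFun f := ⟨⟨colorClasses f.1, isSetComposition_colorClasses f.1,
      fun _ hB u hu v hv hadj => f.2 u v hadj (eq_of_mem_colorClasses hB hu hv)⟩,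
    univ.image f.1, (length_colorClasses f.1).symm⟩
  invFun x := ⟨x.1.2.1.paint x.2.2, fun u v hadj heq => by
    obtain ⟨⟨C, hC, hind⟩, s, hs⟩ := x
    rw [hC.paint_eq_paint_iff] at heq
    exact hind _ (List.getElem_mem _) u (hC.mem_getElem_blockIndex u) v
      (hC.mem_getElem_iff.2 heq.symm) hadj⟩
  left_inv f := Subtype.ext (paint_colorClasses f.1)
  right_inv x := Sigma.subtype_ext (Subtype.ext (colorClasses_paint x.1.2.1 x.2.2))
    (x.1.2.1.image_paint x.2.2)

end ColorClasses

end

/-- The number of proper colorings `f : V → Fin n` of a simple graph `G` equals the sum,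
over all set compositions `C` of `V` whose blocks are independent sets of `G`, of
`choose n (length C)`. -/
theorem count_properColorings_eq_sum_over_compositions
    {V : Type*} [Fintype V] [DecidableEq V] (G : SimpleGraph V) [DecidableRel G.Adj] (n : ℕ) :
    (Finset.univ.filter fun f : V → Fin n => ∀ u v, G.Adj u v → f u ≠ f v).card =
      ∑ᶠ C : {C : List (Finset V) // IsSetComposition C ∧
          ∀ B ∈ C, ∀ u ∈ B, ∀ v ∈ B, ¬ G.Adj u v},
        n.choose C.1.length := by
  have := finite_isSetComposition_and fun C => ∀ B ∈ C, ∀ u ∈ B, ∀ v ∈ B, ¬ G.Adj u v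
  have := Fintype.ofFinite
    {C : List (Finset V) // IsSetComposition C ∧ ∀ B ∈ C, ∀ u ∈ B, ∀ v ∈ B, ¬ G.Adj u v}
  rw [finsum_eq_sum_of_fintype, ← Fintype.card_subtype,
    Fintype.card_congr (properColoringEquiv G), Fintype.card_sigma]
  simp
end

section
/- Let F = ℚ(q) be the field of rational functions over ℚ in the variable q (in Lean, F = RatFunc ℚ with q = RatFunc.X), and let d ∈ ℕ. For n ∈ ℕ write [n]_q = Σ_{i < n} q^i ∈ F. Then the d + 1 functions n ↦ ([n]_q)^k, for k = 0, 1, …, d, form a basis of the F-vector space {f : ℕ → F | 𝔇_d f = 0} of Gaussian polynomial functions of degree at most d. -/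
/-- The operator `(D_j f)(n) = f(n+1) − q^j·f(n)`. -/
def Dop {R : Type*} [CommRing R] (q : R) (j : ℕ) (f : ℕ → R) : ℕ → R :=
  fun n => f (n + 1) - q ^ j * f n

/-- The operator `𝔇_d = D_0 ∘ D_1 ∘ ⋯ ∘ D_d`; a function `f : ℕ → R` is a Gaussian
polynomial function of degree at most `d` if `𝔇_d f = 0`. -/
def Dfull {R : Type*} [CommRing R] (q : R) : ℕ → (ℕ → R) → (ℕ → R)
  | 0 => Dop q 0
  | d + 1 => Dfull q d ∘ Dop q (d + 1)

/-- The `q`-analogue `[n]_q = Σ_{i < n} q^i` in `F = ℚ(q)`. -/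
noncomputable def qNat (n : ℕ) : RatFunc ℚ :=
  ∑ i ∈ Finset.range n, RatFunc.X ^ i

/-!
Write `x n = [n]_q`, so that `x (n + 1) = q * x n + 1`. By the binomial theorem
`D_j (x ^ k) = (q ^ k - q ^ j) • x ^ k + (lower powers of x)`, so `D_{d+1}` maps the span of
`x ^ 0, …, x ^ (d + 1)` into the span of `x ^ 0, …, x ^ d`, and by induction on `d` all these
powers are killed by `𝔇_d`. Conversely, a solution of `𝔇_d f = 0` vanishing at `0, …, d` vanishes
identically, so the kernel of `𝔇_d` has dimension at most `d + 1`. The powers are linearly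
independent because the `[n]_q` are pairwise distinct and a nonzero polynomial has finitely many
roots; hence they span the kernel.
-/

open Finset Polynomial

section Operators

variable {R : Type*} [CommRing R] (q : R)

def DopLinear (j : ℕ) : (ℕ → R) →ₗ[R] (ℕ → R) where
  toFun := Dop q j
  map_add' f g := by funext n; simp only [Dop, Pi.add_apply]; ring
  map_smul' c f := by funext n; simp only [Dop, Pi.smul_apply, smul_eq_mul, RingHom.id_apply]; ring

def DfullLinear : ℕ → (ℕ → R) →ₗ[R] (ℕ → R)
  | 0 => DopLinear q 0
  | d + 1 => DfullLinear d ∘ₗ DopLinear q (d + 1)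

@[simp]
theorem coe_DfullLinear (d : ℕ) : ⇑(DfullLinear q d) = Dfull q d := by
  induction d with
  | zero => rfl
  | succ d ih => simp only [DfullLinear, Dfull, LinearMap.coe_comp, ih]; rfl

variable {q}

theorem eq_zero_of_Dop_eq_zero {j : ℕ} {f : ℕ → R} (hf : Dop q j f = 0) (h0 : f 0 = 0) :
    f = 0 := by
  funext n
  induction n with
  | zero => exact h0
  | succ n ih => simpa [Dop, ih, sub_eq_zero] using congrFun hf n

theorem eq_zero_of_Dfull_eq_zero {d : ℕ} {f : ℕ → R} (hf : Dfull q d f = 0)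
    (h0 : ∀ i ≤ d, f i = 0) : f = 0 := by
  induction d generalizing f with
  | zero => exact eq_zero_of_Dop_eq_zero hf (h0 0 le_rfl)
  | succ d ih =>
    have hDf : Dop q (d + 1) f = 0 :=
      ih hf fun i hi => by simp [Dop, h0 (i + 1) (by omega), h0 i (by omega)]
    exact eq_zero_of_Dop_eq_zero hDf (h0 0 d.succ.zero_le)

variable (R) in
def initialValues (d : ℕ) : (ℕ → R) →ₗ[R] (Fin (d + 1) → R) :=
  LinearMap.funLeft R R Fin.val

theorem initialValues_injective_on_ker (d : ℕ) :
    Function.Injective ((initialValues R d).domRestrict (LinearMap.ker (DfullLinear q d))) := by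
  refine (injective_iff_map_eq_zero _).mpr fun ⟨f, hf⟩ h0 => Subtype.ext ?_
  refine eq_zero_of_Dfull_eq_zero (by simpa using hf) fun i hi => ?_
  simpa [initialValues] using congrFun h0 ⟨i, Nat.lt_succ_of_le hi⟩

end Operators

section Powers

variable {R : Type*} [CommRing R] {q : R} {x : ℕ → R}

def powSpan (x : ℕ → R) (d : ℕ) : Submodule R (ℕ → R) :=
  Submodule.span R (Set.range fun k : Fin (d + 1) => x ^ (k : ℕ))

theorem pow_mem_powSpan {k d : ℕ} (hk : k ≤ d) : x ^ k ∈ powSpan x d :=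
  Submodule.subset_span ⟨⟨k, Nat.lt_succ_of_le hk⟩, rfl⟩

theorem Dop_pow (hrec : ∀ n, x (n + 1) = q * x n + 1) (j k : ℕ) :
    Dop q j (x ^ k) =
      ∑ i ∈ range k, ((k.choose i : R) * q ^ i) • x ^ i + (q ^ k - q ^ j) • x ^ k := by
  funext n
  simp only [Dop, Pi.pow_apply, Pi.add_apply, Finset.sum_apply, Pi.smul_apply, smul_eq_mul, hrec,
    add_pow, sum_range_succ, one_pow, mul_one, mul_pow, Nat.choose_self, Nat.cast_one]
  rw [add_sub_assoc, ← sub_mul]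
  congr 1
  exact sum_congr rfl fun i _ => by ring

-- The coefficient `q ^ (d + 1) - q ^ (d + 1)` of `x ^ (d + 1)` vanishes.
theorem Dop_pow_mem_powSpan (hrec : ∀ n, x (n + 1) = q * x n + 1) {d k : ℕ} (hk : k ≤ d + 1) :
    Dop q (d + 1) (x ^ k) ∈ powSpan x d := by
  rw [Dop_pow hrec]
  refine Submodule.add_mem _ (Submodule.sum_mem _ fun i hi => ?_) ?_
  · exact Submodule.smul_mem _ _ (pow_mem_powSpan (by simp at hi; omega))
  · rcases hk.lt_or_eq with hk | rfl
    · exact Submodule.smul_mem _ _ (pow_mem_powSpan (by omega))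
    · simp

theorem powSpan_le_ker_DfullLinear (hrec : ∀ n, x (n + 1) = q * x n + 1) (d : ℕ) :
    powSpan x d ≤ LinearMap.ker (DfullLinear q d) := by
  induction d with
  | zero =>
    refine Submodule.span_le.mpr ?_
    rintro _ ⟨k, rfl⟩
    funext n
    simp [Fin.fin_one_eq_zero k, Dfull, Dop]
  | succ d ih =>
    refine Submodule.span_le.mpr ?_
    rintro _ ⟨k, rfl⟩
    exact ih (Dop_pow_mem_powSpan hrec k.is_le)

theorem linearIndependent_pow_of_injective [IsDomain R] (hx : Function.Injective x) (d : ℕ) :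
    LinearIndependent R fun k : Fin (d + 1) => x ^ (k : ℕ) := by
  let evalAlong : R[X] →ₗ[R] (ℕ → R) := LinearMap.pi fun n => leval (x n)
  have hker : LinearMap.ker evalAlong = ⊥ := by
    refine (LinearMap.ker_eq_bot').mpr fun p hp => p.eq_zero_of_infinite_isRoot ?_
    refine (Set.infinite_range_of_injective hx).mono ?_
    rintro _ ⟨n, rfl⟩
    simpa [evalAlong] using congrFun hp n
  have hmonomials := ((basisMonomials R).linearIndependent.map' evalAlong hker).comp
    (Fin.val : Fin (d + 1) → ℕ) Fin.val_injective
  have hpow : (fun k : Fin (d + 1) => x ^ (k : ℕ)) = (evalAlong ∘ basisMonomials R) ∘ Fin.val := by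
    funext k n
    simp [evalAlong]
  rwa [hpow]

end Powers

section Field

variable {K : Type*} [Field K]

instance (q : K) (d : ℕ) : FiniteDimensional K (LinearMap.ker (DfullLinear q d)) :=
  Module.Finite.of_injective _ (initialValues_injective_on_ker d)

theorem finrank_ker_DfullLinear_le (q : K) (d : ℕ) :
    Module.finrank K (LinearMap.ker (DfullLinear q d)) ≤ d + 1 := by
  simpa using LinearMap.finrank_le_finrank_of_injective (initialValues_injective_on_ker (q := q) d)

theorem powSpan_eq_ker_DfullLinear {q : K} {x : ℕ → K} (hrec : ∀ n, x (n + 1) = q * x n + 1)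
    (hx : Function.Injective x) (d : ℕ) :
    powSpan x d = LinearMap.ker (DfullLinear q d) := by
  refine Submodule.eq_of_le_of_finrank_le (powSpan_le_ker_DfullLinear hrec d) ?_
  rw [powSpan, finrank_span_eq_card (linearIndependent_pow_of_injective hx d), Fintype.card_fin]
  exact finrank_ker_DfullLinear_le q d

end Field

theorem existsUnique_eq_sum_smul {R M ι : Type*} [Semiring R] [AddCommMonoid M] [Module R M]
    [Fintype ι] {v : ι → M} (hv : LinearIndependent R v) {f : M}
    (hf : f ∈ Submodule.span R (Set.range v)) : ∃! c : ι → R, f = ∑ i, c i • v i := by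
  obtain ⟨c, rfl⟩ := (Submodule.mem_span_range_iff_exists_fun R).mp hf
  exact ⟨c, rfl, fun c' hc' => funext (Fintype.linearIndependent_iffₛ.mp hv c' c hc'.symm)⟩

theorem qNat_succ (n : ℕ) : qNat (n + 1) = RatFunc.X * qNat n + 1 := by
  simp [qNat, sum_range_succ', mul_sum, pow_succ, mul_comm]

theorem qNat_eq_algebraMap (n : ℕ) :
    qNat n = algebraMap ℚ[X] (RatFunc ℚ) (∑ i ∈ range n, X ^ i) := by
  simp [qNat]

-- At `q = 1` the polynomial `[n]_q` evaluates to `n`.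
theorem qNat_injective : Function.Injective qNat := by
  intro m n h
  rw [qNat_eq_algebraMap, qNat_eq_algebraMap] at h
  simpa using congrArg (eval 1) (RatFunc.algebraMap_injective ℚ h)

/-- Over `F = ℚ(q)` with `q = X`, the `d + 1` functions `n ↦ ([n]_q)^k`, `k = 0, …, d`,
form a basis of the space of Gaussian polynomial functions of degree at most `d`: each
lies in the space, they are linearly independent, and they span it. -/
theorem qNat_pow_basis (d : ℕ) :
    (∀ k : Fin (d + 1), Dfull (RatFunc.X : RatFunc ℚ) d (fun n => qNat n ^ (k : ℕ)) = 0) ∧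
    LinearIndependent (RatFunc ℚ)
      (fun (k : Fin (d + 1)) => (fun n => qNat n ^ (k : ℕ) : ℕ → RatFunc ℚ)) ∧
    ∀ f : ℕ → RatFunc ℚ, Dfull (RatFunc.X : RatFunc ℚ) d f = 0 →
      ∃! c : Fin (d + 1) → RatFunc ℚ,
        f = ∑ k : Fin (d + 1), c k • ((fun n => qNat n ^ (k : ℕ)) : ℕ → RatFunc ℚ) := by
  have hspan := powSpan_eq_ker_DfullLinear qNat_succ qNat_injective d
  have hli := linearIndependent_pow_of_injective qNat_injective d
  refine ⟨fun k => ?_, hli, fun f hf => existsUnique_eq_sum_smul hli ?_⟩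
  · have hk := powSpan_le_ker_DfullLinear qNat_succ d (pow_mem_powSpan k.is_le)
    rwa [LinearMap.mem_ker, coe_DfullLinear] at hk
  · rw [← powSpan, hspan]
    simpa using hf
end
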